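/- arXiv:1909.03604 — 5 statements merged into one kernel-verified Lean document; each statement's English description precedes it below -/
import Mathlib

section
/- For the sketch-and-project update x⁺ = x − B^{-1} Aᵀ H (A x − b) (with A x* = b), the squared B-norm of the step equals the sketched loss: ‖x⁺ − x‖²_B = (A x − b)ᵀ H (A x − b). -/
open Matrix BigOperators

/-- The four Penrose equations characterizing the Moore–Penrose pseudoinverse `P` of `M`. -/
def PenroseInv {k : ℕ} (M P : Matrix (Fin k) (Fin k) ℝ) : Prop :=
  M * P * M = M ∧ P * M * P = P ∧ (M * P)ᵀ = M * P ∧ (P * M)ᵀ = P * M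

/-- The projection matrix `Z = B^{-1/2} Aᵀ S (Sᵀ A B⁻¹ Aᵀ S)† Sᵀ A B^{-1/2}`, where `Bh`
plays the role of `B^{1/2}` and `P` that of the pseudoinverse `(Sᵀ A B⁻¹ Aᵀ S)†`. -/
noncomputable def Zmat {m n τ : ℕ} (A : Matrix (Fin m) (Fin n) ℝ) (B Bh : Matrix (Fin n) (Fin n) ℝ)
    (S : Matrix (Fin m) (Fin τ) ℝ) (P : Matrix (Fin τ) (Fin τ) ℝ) :
    Matrix (Fin n) (Fin n) ℝ :=
  Bh⁻¹ * Aᵀ * (S * P * Sᵀ) * A * Bh⁻¹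

lemma penrose_unique {k : ℕ} {M P Q : Matrix (Fin k) (Fin k) ℝ}
    (hP : PenroseInv M P) (hQ : PenroseInv M Q) : P = Q := by
  obtain ⟨hP1, hP2, hP3, hP4⟩ := hP
  obtain ⟨hQ1, hQ2, hQ3, hQ4⟩ := hQ
  have hMP : M * P = M * Q := by
    calc M * P = M * Q * M * P := by rw [hQ1]
    _ = (M * Q) * (M * P) := by simp only [Matrix.mul_assoc]
    _ = (M * Q)ᵀ * (M * P)ᵀ := by rw [hQ3, hP3]
    _ = (M * P * (M * Q))ᵀ := (Matrix.transpose_mul (M * P) (M * Q)).symm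
    _ = ((M * P * M) * Q)ᵀ := by simp only [Matrix.mul_assoc]
    _ = (M * Q)ᵀ := by rw [hP1]
    _ = M * Q := hQ3
  have hPM : P * M = Q * M := by
    calc P * M = P * (M * Q * M) := by rw [hQ1]
    _ = (P * M) * (Q * M) := by simp only [Matrix.mul_assoc]
    _ = (P * M)ᵀ * (Q * M)ᵀ := by rw [hP4, hQ4]
    _ = ((Q * M) * (P * M))ᵀ := (Matrix.transpose_mul (Q * M) (P * M)).symm
    _ = (Q * (M * P * M))ᵀ := by simp only [Matrix.mul_assoc]
    _ = (Q * M)ᵀ := by rw [hP1]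
    _ = Q * M := hQ4
  calc P = P * M * P := hP2.symm
  _ = Q * M * P := by rw [hPM]
  _ = Q * (M * P) := by rw [Matrix.mul_assoc]
  _ = Q * (M * Q) := by rw [hMP]
  _ = Q * M * Q := by rw [Matrix.mul_assoc]
  _ = Q := hQ2

lemma penrose_symm {k : ℕ} {M P : Matrix (Fin k) (Fin k) ℝ}
    (hM : Mᵀ = M) (hP : PenroseInv M P) : Pᵀ = P := by
  obtain ⟨hP1, hP2, hP3, hP4⟩ := hP
  have hQ : PenroseInv M Pᵀ := by
    refine ⟨?_, ?_, ?_, ?_⟩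
    · calc M * Pᵀ * M = (Mᵀ * P * Mᵀ)ᵀ := by
            simp [Matrix.transpose_mul, hM, Matrix.mul_assoc]
      _ = M := by rw [hM, hP1, hM]
    · calc Pᵀ * M * Pᵀ = (P * Mᵀ * P)ᵀ := by
            simp [Matrix.transpose_mul, Matrix.mul_assoc]
      _ = Pᵀ := by rw [hM, hP2]
    · calc (M * Pᵀ)ᵀ = P * Mᵀ := by rw [Matrix.transpose_mul, Matrix.transpose_transpose]
      _ = P * M := by rw [hM]
      _ = (P * M)ᵀ := hP4.symm
      _ = Mᵀ * Pᵀ := by rw [Matrix.transpose_mul]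
      _ = M * Pᵀ := by rw [hM]
    · calc (Pᵀ * M)ᵀ = Mᵀ * P := by rw [Matrix.transpose_mul, Matrix.transpose_transpose]
      _ = M * P := by rw [hM]
      _ = (M * P)ᵀ := hP3.symm
      _ = Pᵀ * Mᵀ := by rw [Matrix.transpose_mul]
      _ = Pᵀ * M := by rw [hM]
  exact penrose_unique hQ ⟨hP1, hP2, hP3, hP4⟩

/-- The squared B-norm of the sketch-and-project step equals the sketched loss:
`‖x⁺ − x‖²_B = (A x − b)ᵀ H (A x − b)`. -/
theorem step_B_norm_eq_sketched_loss {m n τ : ℕ}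
    (A : Matrix (Fin m) (Fin n) ℝ) (b : Fin m → ℝ)
    (B Bh : Matrix (Fin n) (Fin n) ℝ)
    (hB : B.PosDef) (hBh : Bh.PosDef) (hBhB : Bh * Bh = B)
    (S : Matrix (Fin m) (Fin τ) ℝ) (P : Matrix (Fin τ) (Fin τ) ℝ)
    (hP : PenroseInv (Sᵀ * A * B⁻¹ * Aᵀ * S) P)
    (x xs : Fin n → ℝ) (hxs : A.mulVec xs = b) :
    (x - (B⁻¹ * Aᵀ * (S * P * Sᵀ)).mulVec (A.mulVec x - b) - x) ⬝ᵥ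
        B.mulVec (x - (B⁻¹ * Aᵀ * (S * P * Sᵀ)).mulVec (A.mulVec x - b) - x)
      = (A.mulVec x - b) ⬝ᵥ (S * P * Sᵀ).mulVec (A.mulVec x - b) := by
  set r := A.mulVec x - b with hr
  set H := S * P * Sᵀ with hH
  have hdet : B.det ≠ 0 := ne_of_gt hB.det_pos
  have hBBinv : B * B⁻¹ = 1 := Matrix.mul_nonsing_inv B (isUnit_iff_ne_zero.mpr hdet)
  have hBsymm : Bᵀ = B := hB.isHermitian.eq
  have hBinvsymm : (B⁻¹)ᵀ = B⁻¹ := by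
    rw [Matrix.transpose_nonsing_inv, hBsymm]
  have hMsymm : (Sᵀ * A * B⁻¹ * Aᵀ * S)ᵀ = Sᵀ * A * B⁻¹ * Aᵀ * S := by
    simp [Matrix.transpose_mul, hBinvsymm, Matrix.mul_assoc]
  have hPsymm : Pᵀ = P := penrose_symm hMsymm hP
  have hHsymm : Hᵀ = H := by
    rw [hH]
    simp [Matrix.transpose_mul, hPsymm, Matrix.mul_assoc]
  have h2 : H * A * B⁻¹ * Aᵀ * H = H := by
    have h1 : H * A * B⁻¹ * Aᵀ * H = S * (P * (Sᵀ * A * B⁻¹ * Aᵀ * S) * P) * Sᵀ := by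
      rw [hH]; simp [Matrix.mul_assoc]
    rw [h1, hP.2.1, hH]
  have key : (B⁻¹ * Aᵀ * H)ᵀ * (Aᵀ * H) = H := by
    simp only [Matrix.transpose_mul, Matrix.transpose_transpose, hHsymm, hBinvsymm]
    simp only [← Matrix.mul_assoc]
    exact h2
  set v := (B⁻¹ * Aᵀ * H).mulVec r with hv
  have hvec : x - v - x = -v := sub_sub_cancel_left x v
  rw [hvec]
  have hmat : B * (B⁻¹ * Aᵀ * H) = Aᵀ * H := by
    simp only [← Matrix.mul_assoc]
    rw [hBBinv, Matrix.one_mul]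
  have hBv : B.mulVec (-v) = -((Aᵀ * H).mulVec r) := by
    rw [Matrix.mulVec_neg, hv, Matrix.mulVec_mulVec, hmat]
  rw [hBv, dotProduct_neg, neg_dotProduct, neg_neg, hv]
  rw [Matrix.dotProduct_mulVec ((B⁻¹ * Aᵀ * H).mulVec r) (Aᵀ * H) r,
    ← Matrix.vecMul_transpose, Matrix.vecMul_vecMul, key,
    Matrix.dotProduct_mulVec r H r]
end

section
/- For the sketch-and-project update x⁺ = x − B^{-1} Aᵀ H (A x − b) (with A x* = b), the error decreases exactly by the sketched loss: ‖x⁺ − x*‖²_B = ‖x − x*‖²_B − (A x − b)ᵀ H (A x − b). -/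
open Matrix BigOperators

lemma penrose_transpose {k : ℕ} {M P : Matrix (Fin k) (Fin k) ℝ}
    (hM : Mᵀ = M) (hP : PenroseInv M P) : PenroseInv M Pᵀ := by
  obtain ⟨h1, h2, h3, h4⟩ := hP
  refine ⟨?_, ?_, ?_, ?_⟩
  · calc M * Pᵀ * M = (M * P * M)ᵀ := by simp [Matrix.transpose_mul, hM, Matrix.mul_assoc]
    _ = M := by rw [h1, hM]
  · calc Pᵀ * M * Pᵀ = (P * M * P)ᵀ := by simp [Matrix.transpose_mul, hM, Matrix.mul_assoc]
    _ = Pᵀ := by rw [h2]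
  · calc (M * Pᵀ)ᵀ = P * Mᵀ := by rw [Matrix.transpose_mul, Matrix.transpose_transpose]
    _ = P * M := by rw [hM]
    _ = (P * M)ᵀ := h4.symm
    _ = Mᵀ * Pᵀ := by rw [Matrix.transpose_mul]
    _ = M * Pᵀ := by rw [hM]
  · calc (Pᵀ * M)ᵀ = Mᵀ * P := by rw [Matrix.transpose_mul, Matrix.transpose_transpose]
    _ = M * P := by rw [hM]
    _ = (M * P)ᵀ := h3.symm
    _ = Pᵀ * Mᵀ := by rw [Matrix.transpose_mul]
    _ = Pᵀ * M := by rw [hM]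

/-- One sketch-and-project step decreases the squared B-norm error exactly by the
sketched loss: `‖x⁺ − x*‖²_B = ‖x − x*‖²_B − (A x − b)ᵀ H (A x − b)`. -/
theorem error_decrease_eq_sketched_loss {m n τ : ℕ}
    (A : Matrix (Fin m) (Fin n) ℝ) (b : Fin m → ℝ)
    (B Bh : Matrix (Fin n) (Fin n) ℝ)
    (hB : B.PosDef) (hBh : Bh.PosDef) (hBhB : Bh * Bh = B)
    (S : Matrix (Fin m) (Fin τ) ℝ) (P : Matrix (Fin τ) (Fin τ) ℝ)
    (hP : PenroseInv (Sᵀ * A * B⁻¹ * Aᵀ * S) P)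
    (x xs : Fin n → ℝ) (hxs : A.mulVec xs = b) :
    (x - (B⁻¹ * Aᵀ * (S * P * Sᵀ)).mulVec (A.mulVec x - b) - xs) ⬝ᵥ
        B.mulVec (x - (B⁻¹ * Aᵀ * (S * P * Sᵀ)).mulVec (A.mulVec x - b) - xs)
      = (x - xs) ⬝ᵥ B.mulVec (x - xs)
        - (A.mulVec x - b) ⬝ᵥ (S * P * Sᵀ).mulVec (A.mulVec x - b) := by
  have hBB : B * B⁻¹ = 1 :=
    Matrix.mul_nonsing_inv B ((Matrix.isUnit_iff_isUnit_det B).mp hB.isUnit)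
  have hBt : Bᵀ = B := by simpa [Matrix.IsHermitian] using hB.isHermitian
  have hBit : (B⁻¹)ᵀ = B⁻¹ := by rw [Matrix.transpose_nonsing_inv, hBt]
  have hNt : (Sᵀ * A * B⁻¹ * Aᵀ * S)ᵀ = Sᵀ * A * B⁻¹ * Aᵀ * S := by
    simp [Matrix.transpose_mul, Matrix.transpose_transpose, hBit, Matrix.mul_assoc]
  have hPt : Pᵀ = P := penrose_symm hNt hP
  set H := S * P * Sᵀ with hH
  have hHt : Hᵀ = H := by
    rw [hH]; simp [Matrix.transpose_mul, Matrix.transpose_transpose, hPt, Matrix.mul_assoc]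
  have hHMH : H * (A * B⁻¹ * Aᵀ) * H = H := by
    have h2 := hP.2.1
    calc H * (A * B⁻¹ * Aᵀ) * H
        = S * (P * (Sᵀ * A * B⁻¹ * Aᵀ * S) * P) * Sᵀ := by
          rw [hH]; simp [Matrix.mul_assoc]
    _ = S * P * Sᵀ := by rw [h2]
  have hres : A.mulVec x - b = A.mulVec (x - xs) := by
    rw [← hxs, Matrix.mulVec_sub]
  rw [hres]
  set e := x - xs with he
  set r := A.mulVec e with hr
  have hgoal : x - (B⁻¹ * Aᵀ * H).mulVec r - xs = e - (B⁻¹ * Aᵀ * H).mulVec r := by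
    exact sub_right_comm x ((B⁻¹ * Aᵀ * H).mulVec r) xs
  rw [hgoal]
  set w := (B⁻¹ * Aᵀ * H).mulVec r with hw
  have hBw : B.mulVec w = (Aᵀ * H).mulVec r := by
    rw [hw, Matrix.mulVec_mulVec]
    congr 1
    rw [show B * (B⁻¹ * Aᵀ * H) = B * B⁻¹ * (Aᵀ * H) from by simp [Matrix.mul_assoc],
      hBB, Matrix.one_mul]
  have key : ∀ v : Fin n → ℝ, v ⬝ᵥ (Aᵀ * H).mulVec r = (A.mulVec v) ⬝ᵥ H.mulVec r := by
    intro v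
    rw [← Matrix.mulVec_mulVec, Matrix.dotProduct_mulVec, Matrix.vecMul_transpose]
  have hi : e ⬝ᵥ B.mulVec w = r ⬝ᵥ H.mulVec r := by
    rw [hBw, key e, ← hr]
  have hii : w ⬝ᵥ B.mulVec e = r ⬝ᵥ H.mulVec r := by
    calc w ⬝ᵥ B.mulVec e = (w ᵥ* B) ⬝ᵥ e := Matrix.dotProduct_mulVec _ _ _
    _ = (Bᵀ.mulVec w) ⬝ᵥ e := by rw [Matrix.mulVec_transpose]
    _ = (B.mulVec w) ⬝ᵥ e := by rw [hBt]
    _ = e ⬝ᵥ B.mulVec w := dotProduct_comm _ _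
    _ = r ⬝ᵥ H.mulVec r := hi
  have hiii : w ⬝ᵥ B.mulVec w = r ⬝ᵥ H.mulVec r := by
    rw [hBw, key w]
    have hAw : A.mulVec w = (A * B⁻¹ * Aᵀ * H).mulVec r := by
      rw [hw, Matrix.mulVec_mulVec]
      congr 1
      simp [Matrix.mul_assoc]
    rw [hAw, Matrix.dotProduct_mulVec]
    calc ((A * B⁻¹ * Aᵀ * H).mulVec r ᵥ* H) ⬝ᵥ r
        = (Hᵀ.mulVec ((A * B⁻¹ * Aᵀ * H).mulVec r)) ⬝ᵥ r := by rw [Matrix.mulVec_transpose]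
    _ = ((Hᵀ * (A * B⁻¹ * Aᵀ * H)).mulVec r) ⬝ᵥ r := by rw [Matrix.mulVec_mulVec]
    _ = ((H * (A * B⁻¹ * Aᵀ) * H).mulVec r) ⬝ᵥ r := by
          rw [hHt]; congr 2; simp [Matrix.mul_assoc]
    _ = (H.mulVec r) ⬝ᵥ r := by rw [hHMH]
    _ = r ⬝ᵥ H.mulVec r := dotProduct_comm _ _
  calc (e - w) ⬝ᵥ B.mulVec (e - w)
      = e ⬝ᵥ B.mulVec e - e ⬝ᵥ B.mulVec w - (w ⬝ᵥ B.mulVec e - w ⬝ᵥ B.mulVec w) := by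
        rw [Matrix.mulVec_sub, sub_dotProduct, dotProduct_sub,
          dotProduct_sub]
  _ = e ⬝ᵥ B.mulVec e - r ⬝ᵥ H.mulVec r := by rw [hi, hii, hiii]; ring
end

section
/- After one sketch-and-project step with sketch S, the sketched loss of that same sketch vanishes at the new iterate: if x⁺ = x − B^{-1} Aᵀ H (A x − b) and A x* = b, then (A x⁺ − b)ᵀ H (A x⁺ − b) = 0. -/
open Matrix BigOperators

/-- After one sketch-and-project step with sketch `S`, the sketched loss of that same
sketch vanishes at the new iterate. -/
theorem sketched_loss_vanishes_after_step {m n τ : ℕ}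
    (A : Matrix (Fin m) (Fin n) ℝ) (b : Fin m → ℝ)
    (B Bh : Matrix (Fin n) (Fin n) ℝ)
    (hB : B.PosDef) (hBh : Bh.PosDef) (hBhB : Bh * Bh = B)
    (S : Matrix (Fin m) (Fin τ) ℝ) (P : Matrix (Fin τ) (Fin τ) ℝ)
    (hP : PenroseInv (Sᵀ * A * B⁻¹ * Aᵀ * S) P)
    (x xs : Fin n → ℝ) (hxs : A.mulVec xs = b) :
    (A.mulVec (x - (B⁻¹ * Aᵀ * (S * P * Sᵀ)).mulVec (A.mulVec x - b)) - b) ⬝ᵥ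
        (S * P * Sᵀ).mulVec
          (A.mulVec (x - (B⁻¹ * Aᵀ * (S * P * Sᵀ)).mulVec (A.mulVec x - b)) - b)
      = 0 := by
  obtain ⟨h1, h2, h3, h4⟩ := hP
  set H : Matrix (Fin m) (Fin m) ℝ := S * P * Sᵀ with hH
  set r : Fin m → ℝ := A.mulVec x - b with hr
  have key : H * (A * B⁻¹ * Aᵀ * H) = H := by
    calc H * (A * B⁻¹ * Aᵀ * H) = S * (P * (Sᵀ * A * B⁻¹ * Aᵀ * S) * P) * Sᵀ := by
          simp only [hH, Matrix.mul_assoc]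
      _ = H := by rw [h2, hH]
  have hv : H.mulVec (A.mulVec (x - (B⁻¹ * Aᵀ * H).mulVec r) - b) = 0 := by
    have : A.mulVec (x - (B⁻¹ * Aᵀ * H).mulVec r) - b
        = r - (A * B⁻¹ * Aᵀ * H).mulVec r := by
      simp only [Matrix.mulVec_sub, hr, Matrix.mulVec_mulVec, Matrix.mul_assoc]
      abel
    rw [this, Matrix.mulVec_sub, Matrix.mulVec_mulVec, key, sub_self]
  rw [hv, dotProduct_zero]
end

section
/- The sketch-and-project error vectors remain in the range of B^{-1} Aᵀ: if x⁰ ∈ range(B^{-1} Aᵀ) and x* is the B-norm least-norm solution of A x = b, then every iterate x^k of the sketch-and-project method satisfies x^k − x* ∈ range(B^{-1} Aᵀ). -/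
open Matrix BigOperators

/-! The least `B`-norm solution `x*` satisfies the first-order condition `B x* ⊥ ker A`, hence
`B x* ∈ range Aᵀ = (ker A)ᗮ` and `x* ∈ range (B⁻¹ Aᵀ)`. Each sketch-and-project update subtracts
a vector of the form `B⁻¹ Aᵀ u`, so the subspace `range (B⁻¹ Aᵀ)`, which contains `x⁰ − x*`,
contains every `x^k − x*`. -/

namespace Matrix

variable {m n : Type*} [Fintype n]

theorem mem_range_transpose_mulVec_of_forall_dotProduct_eq_zero [Fintype m]
    (A : Matrix m n ℝ) {v : n → ℝ} (hv : ∀ z, A *ᵥ z = 0 → z ⬝ᵥ v = 0) :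
    v ∈ Set.range Aᵀ.mulVec := by
  classical
  have hker : WithLp.toLp 2 v ∈ (toEuclideanLin A).kerᗮ := by
    intro z hz
    have hAz : A *ᵥ z.ofLp = 0 := congrArg WithLp.ofLp hz
    simpa [EuclideanSpace.inner_eq_star_dotProduct, dotProduct_comm] using hv _ hAz
  rw [LinearMap.orthogonal_ker, ← toEuclideanLin_conjTranspose_eq_adjoint,
    conjTranspose_eq_transpose_of_trivial] at hker
  obtain ⟨w, hw⟩ := hker
  exact ⟨w.ofLp, congrArg WithLp.ofLp hw⟩

theorem dotProduct_mulVec_eq_zero_of_le_on_solutions {A : Matrix m n ℝ} {B : Matrix n n ℝ}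
    (hBt : Bᵀ = B) {b : m → ℝ} {xs : n → ℝ} (hxs : A *ᵥ xs = b)
    (hmin : ∀ y, A *ᵥ y = b → xs ⬝ᵥ B *ᵥ xs ≤ y ⬝ᵥ B *ᵥ y) {z : n → ℝ} (hz : A *ᵥ z = 0) :
    z ⬝ᵥ B *ᵥ xs = 0 := by
  have hexpand (t : ℝ) : (xs + t • z) ⬝ᵥ B *ᵥ (xs + t • z)
      = (z ⬝ᵥ B *ᵥ z) * (t * t) + 2 * (z ⬝ᵥ B *ᵥ xs) * t + xs ⬝ᵥ B *ᵥ xs := by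
    have hsymm : xs ⬝ᵥ B *ᵥ z = z ⬝ᵥ B *ᵥ xs := by
      rw [dotProduct_mulVec, ← mulVec_transpose, hBt, dotProduct_comm]
    simp only [mulVec_add, mulVec_smul, add_dotProduct, dotProduct_add, smul_dotProduct,
      dotProduct_smul, smul_eq_mul, hsymm]
    ring
  have hquad (t : ℝ) : 0 ≤ (z ⬝ᵥ B *ᵥ z) * (t * t) + 2 * (z ⬝ᵥ B *ᵥ xs) * t + 0 := by
    have := hmin (xs + t • z) (by rw [mulVec_add, mulVec_smul, hz, hxs, smul_zero, add_zero])
    linarith [hexpand t]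
  have hdiscrim := discrim_le_zero hquad
  rw [discrim] at hdiscrim
  nlinarith [sq_nonneg (z ⬝ᵥ B *ᵥ xs)]

theorem mem_range_inv_mul_transpose_of_le_on_solutions [Fintype m] [DecidableEq n]
    {A : Matrix m n ℝ} {B : Matrix n n ℝ} (hBt : Bᵀ = B) (hB : IsUnit B)
    {b : m → ℝ} {xs : n → ℝ} (hxs : A *ᵥ xs = b)
    (hmin : ∀ y, A *ᵥ y = b → xs ⬝ᵥ B *ᵥ xs ≤ y ⬝ᵥ B *ᵥ y) :
    xs ∈ Set.range (B⁻¹ * Aᵀ).mulVec := by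
  obtain ⟨w, hw⟩ := mem_range_transpose_mulVec_of_forall_dotProduct_eq_zero A
    fun z hz ↦ dotProduct_mulVec_eq_zero_of_le_on_solutions hBt hxs hmin hz
  refine ⟨w, ?_⟩
  rw [← mulVec_mulVec, hw, mulVec_mulVec, nonsing_inv_mul B ((isUnit_iff_isUnit_det B).mp hB),
    one_mulVec]

end Matrix

theorem iterates_error_in_range_general {m n τ : ℕ}
    (A : Matrix (Fin m) (Fin n) ℝ) (b : Fin m → ℝ)
    (B : Matrix (Fin n) (Fin n) ℝ) (hB : B.PosDef)
    (S : ℕ → Matrix (Fin m) (Fin τ) ℝ) (P : ℕ → Matrix (Fin τ) (Fin τ) ℝ)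
    (xs : Fin n → ℝ) (hxs : A.mulVec xs = b)
    (hmin : ∀ y, A.mulVec y = b → xs ⬝ᵥ B.mulVec xs ≤ y ⬝ᵥ B.mulVec y)
    (x : ℕ → Fin n → ℝ)
    (hx0 : x 0 ∈ Set.range (B⁻¹ * Aᵀ).mulVec)
    (hupd : ∀ k, x (k + 1)
      = x k - (B⁻¹ * Aᵀ * (S k * P k * (S k)ᵀ)).mulVec (A.mulVec (x k) - b)) :
    ∀ k, x k - xs ∈ Set.range (B⁻¹ * Aᵀ).mulVec := by
  have hxs_mem : xs ∈ LinearMap.range (B⁻¹ * Aᵀ).mulVecLin :=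
    mem_range_inv_mul_transpose_of_le_on_solutions hB.isHermitian.eq hB.isUnit hxs hmin
  have hstep (k : ℕ) : x k - x (k + 1) ∈ LinearMap.range (B⁻¹ * Aᵀ).mulVecLin :=
    ⟨(S k * P k * (S k)ᵀ) *ᵥ (A *ᵥ x k - b), by rw [hupd k, sub_sub_cancel, mulVecLin_apply,
      mulVec_mulVec]⟩
  intro k
  show x k - xs ∈ LinearMap.range (B⁻¹ * Aᵀ).mulVecLin
  induction k with
  | zero => exact Submodule.sub_mem _ hx0 hxs_mem
  | succ k ih => simpa only [sub_sub_sub_cancel_left] using Submodule.sub_mem _ ih (hstep k)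

/-- Sketch-and-project error vectors remain in `range(B⁻¹ Aᵀ)`: if `x⁰ ∈ range(B⁻¹ Aᵀ)`
and `x*` is the B-norm least-norm solution of `A x = b`, then every iterate satisfies
`x^k − x* ∈ range(B⁻¹ Aᵀ)`. -/
theorem iterates_error_in_range {m n τ : ℕ}
    (A : Matrix (Fin m) (Fin n) ℝ) (b : Fin m → ℝ)
    (B : Matrix (Fin n) (Fin n) ℝ) (hB : B.PosDef)
    (S : ℕ → Matrix (Fin m) (Fin τ) ℝ) (P : ℕ → Matrix (Fin τ) (Fin τ) ℝ)
    (hP : ∀ k, PenroseInv ((S k)ᵀ * A * B⁻¹ * Aᵀ * S k) (P k))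
    (xs : Fin n → ℝ) (hxs : A.mulVec xs = b)
    (hmin : ∀ y, A.mulVec y = b → xs ⬝ᵥ B.mulVec xs ≤ y ⬝ᵥ B.mulVec y)
    (x : ℕ → Fin n → ℝ)
    (hx0 : x 0 ∈ Set.range (B⁻¹ * Aᵀ).mulVec)
    (hupd : ∀ k, x (k + 1)
      = x k - (B⁻¹ * Aᵀ * (S k * P k * (S k)ᵀ)).mulVec (A.mulVec (x k) - b)) :
    ∀ k, x k - xs ∈ Set.range (B⁻¹ * Aᵀ).mulVec :=
  iterates_error_in_range_general A b B hB S P xs hxs hmin x hx0 hupd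
end

section
/- Max-distance sketch-and-project converges linearly: if at each step the sketch maximizing the sketched loss is selected and x⁰ ∈ range(B^{-1}Aᵀ), then ‖x^k − x*‖²_B ≤ (1 − σ_∞²(B,S))^k ‖x⁰ − x*‖²_B. -/
open Matrix BigOperators

/-- Sketched loss expressed via the projection `Z`:  `f(x) = ‖B^{1/2}(x - x*)‖²_Z`. -/
noncomputable def zloss {m n τ : ℕ} (A : Matrix (Fin m) (Fin n) ℝ)
    (B Bh : Matrix (Fin n) (Fin n) ℝ) (S : Matrix (Fin m) (Fin τ) ℝ)
    (P : Matrix (Fin τ) (Fin τ) ℝ) (xs x : Fin n → ℝ) : ℝ :=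
  Bh.mulVec (x - xs) ⬝ᵥ (Zmat A B Bh S P).mulVec (Bh.mulVec (x - xs))

/-- The spectral constant `σ_p²(B,S)`. -/
noncomputable def sigmaP {m n τ q : ℕ} (A : Matrix (Fin m) (Fin n) ℝ)
    (B Bh : Matrix (Fin n) (Fin n) ℝ) (S : Fin q → Matrix (Fin m) (Fin τ) ℝ)
    (P : Fin q → Matrix (Fin τ) (Fin τ) ℝ) (p : Fin q → ℝ) : ℝ :=
  sInf {r : ℝ | ∃ v, v ≠ 0 ∧ v ∈ Set.range (B⁻¹ * Aᵀ).mulVec ∧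
    r = Bh.mulVec v ⬝ᵥ (∑ i, p i • Zmat A B Bh (S i) (P i)).mulVec (Bh.mulVec v) /
      (v ⬝ᵥ B.mulVec v)}

/-- The spectral constant `σ_∞²(B,S)`. -/
noncomputable def sigmaInf {m n τ q : ℕ} (A : Matrix (Fin m) (Fin n) ℝ)
    (B Bh : Matrix (Fin n) (Fin n) ℝ) (S : Fin q → Matrix (Fin m) (Fin τ) ℝ)
    (P : Fin q → Matrix (Fin τ) (Fin τ) ℝ) : ℝ :=
  sInf {r : ℝ | ∃ v, v ≠ 0 ∧ v ∈ Set.range (B⁻¹ * Aᵀ).mulVec ∧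
    r = ⨆ i, Bh.mulVec v ⬝ᵥ (Zmat A B Bh (S i) (P i)).mulVec (Bh.mulVec v) /
      (v ⬝ᵥ B.mulVec v)}

/-- The sketched loss `f_i(x) = ‖A x − b‖²_{H_i}`. -/
noncomputable def sketchLoss {m n τ : ℕ} (A : Matrix (Fin m) (Fin n) ℝ) (b : Fin m → ℝ)
    (S : Matrix (Fin m) (Fin τ) ℝ) (P : Matrix (Fin τ) (Fin τ) ℝ) (x : Fin n → ℝ) : ℝ :=
  (A.mulVec x - b) ⬝ᵥ (S * P * Sᵀ).mulVec (A.mulVec x - b)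


/-!
Put `e = B^{1/2} (x - x*)`. A sketch-and-project step replaces `e` by `(1 - Z_i) e`, and `Z_i`
is an orthogonal projection, so the squared `B`-norm of the error drops by exactly
`‖e‖²_{Z_i}`, the sketched loss `f_i(x)`. The greedy choice of `i` makes this drop
`max_i ‖e‖²_{Z_i}`, which is at least `σ_∞² ‖x - x*‖²_B` as long as `x - x*` lies in
`range (B⁻¹ Aᵀ)`. That invariant holds initially because the least-norm solution `x*` is
`B`-orthogonal to `ker A`, and each step moves inside it.
-/

namespace PenroseInv

variable {k : ℕ} {M P Q : Matrix (Fin k) (Fin k) ℝ}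

theorem unique (hP : PenroseInv M P) (hQ : PenroseInv M Q) : P = Q := by
  obtain ⟨hMPM, hPMP, hMP, hPM⟩ := hP
  obtain ⟨hMQM, hQMQ, hMQ, hQM⟩ := hQ
  have hMP_eq : M * P = M * Q := by
    calc M * P = (M * Q) * (M * P) := by rw [← Matrix.mul_assoc, hMQM]
    _ = (M * Q)ᵀ * (M * P)ᵀ := by rw [hMP, hMQ]
    _ = (M * P * M * Q)ᵀ := by simp only [transpose_mul, Matrix.mul_assoc]
    _ = M * Q := by rw [hMPM, hMQ]
  have hPM_eq : P * M = Q * M := by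
    calc P * M = (P * M) * (Q * M) := by rw [Matrix.mul_assoc, ← Matrix.mul_assoc M, hMQM]
    _ = (P * M)ᵀ * (Q * M)ᵀ := by rw [hPM, hQM]
    _ = (Q * (M * P * M))ᵀ := by simp only [transpose_mul, Matrix.mul_assoc]
    _ = Q * M := by rw [hMPM, hQM]
  calc P = P * M * P := hPMP.symm
  _ = Q * M * Q := by rw [hPM_eq, Matrix.mul_assoc, hMP_eq, ← Matrix.mul_assoc]
  _ = Q := hQMQ

theorem transpose (hM : Mᵀ = M) (hP : PenroseInv M P) : PenroseInv M Pᵀ := by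
  obtain ⟨hMPM, hPMP, hMP, hPM⟩ := hP
  refine ⟨?_, ?_, ?_, ?_⟩
  · simpa only [transpose_mul, hM, Matrix.mul_assoc] using congrArg Matrix.transpose hMPM
  · simpa only [transpose_mul, hM, Matrix.mul_assoc] using congrArg Matrix.transpose hPMP
  · rw [transpose_mul, transpose_transpose, hM]
    nth_rw 2 [← hM]
    rw [← transpose_mul, hPM]
  · rw [transpose_mul, transpose_transpose, hM]
    nth_rw 2 [← hM]
    rw [← transpose_mul, hMP]

theorem transpose_eq_self (hM : Mᵀ = M) (hP : PenroseInv M P) : Pᵀ = P :=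
  (hP.transpose hM).unique hP

end PenroseInv

theorem Matrix.mulVec_dotProduct_mulVec {ι κ μ : Type*} [Fintype ι] [Fintype κ] [Fintype μ]
    (M : Matrix ι κ ℝ) (N : Matrix ι μ ℝ) (v : κ → ℝ) (w : μ → ℝ) :
    M *ᵥ v ⬝ᵥ N *ᵥ w = v ⬝ᵥ (Mᵀ * N) *ᵥ w := by
  rw [← mulVec_mulVec, dotProduct_mulVec v, vecMul_transpose]

section Projection

variable {ι : Type*} [Fintype ι] {Z : Matrix ι ι ℝ}

theorem IsStarProjection.mulVec_dotProduct_mulVec_self (hZ : IsStarProjection Z) (w : ι → ℝ) :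
    Z *ᵥ w ⬝ᵥ Z *ᵥ w = w ⬝ᵥ Z *ᵥ w := by
  have hZt : Zᵀ = Z := by
    simpa [star_eq_conjTranspose] using hZ.isSelfAdjoint.star_eq
  rw [Matrix.mulVec_dotProduct_mulVec, hZt, hZ.isIdempotentElem.eq]

theorem IsStarProjection.dotProduct_mulVec_nonneg (hZ : IsStarProjection Z) (w : ι → ℝ) :
    0 ≤ w ⬝ᵥ Z *ᵥ w := by
  simpa [hZ.mulVec_dotProduct_mulVec_self] using dotProduct_self_star_nonneg (Z *ᵥ w)

theorem IsStarProjection.dotProduct_mulVec_le [DecidableEq ι] (hZ : IsStarProjection Z)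
    (w : ι → ℝ) :
    w ⬝ᵥ Z *ᵥ w ≤ w ⬝ᵥ w := by
  have := hZ.one_sub.dotProduct_mulVec_nonneg w
  rwa [sub_mulVec, Matrix.one_mulVec, dotProduct_sub, sub_nonneg] at this

end Projection

theorem Matrix.mem_range_transpose_mulVec_of_orthogonal_ker {ι κ : Type*} [Fintype ι]
    [Fintype κ] [DecidableEq ι] [DecidableEq κ] (A : Matrix ι κ ℝ) {u : κ → ℝ}
    (h : ∀ z, A *ᵥ z = 0 → u ⬝ᵥ z = 0) :
    u ∈ Set.range Aᵀ.mulVec := by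
  have hu : WithLp.toLp 2 u ∈ (toEuclideanLin A).kerᗮ := by
    rw [Submodule.mem_orthogonal]
    intro z hz
    rw [EuclideanSpace.inner_eq_star_dotProduct]
    simpa [dotProduct_comm] using h z.ofLp (congrArg WithLp.ofLp hz)
  rw [LinearMap.orthogonal_ker, ← toEuclideanLin_conjTranspose_eq_adjoint] at hu
  obtain ⟨w, hw⟩ := hu
  exact ⟨w.ofLp, congrArg WithLp.ofLp hw⟩

theorem dotProduct_mulVec_eq_zero_of_forall_le {ι κ : Type*} [Fintype κ] {A : Matrix ι κ ℝ}
    {B : Matrix κ κ ℝ} (hB : B.PosSemidef) {b : ι → ℝ} {xs : κ → ℝ} (hxs : A *ᵥ xs = b)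
    (hmin : ∀ y, A *ᵥ y = b → xs ⬝ᵥ B *ᵥ xs ≤ y ⬝ᵥ B *ᵥ y) {z : κ → ℝ} (hz : A *ᵥ z = 0) :
    B *ᵥ xs ⬝ᵥ z = 0 := by
  have hB_symm : Bᵀ = B := hB.isHermitian.eq
  have hxz : xs ⬝ᵥ B *ᵥ z = B *ᵥ xs ⬝ᵥ z := by
    rw [dotProduct_mulVec, ← mulVec_transpose, hB_symm, dotProduct_comm]
  -- the minimality of `xs` along the feasible line `xs + t • z`
  have hquad : ∀ t : ℝ, 0 ≤ z ⬝ᵥ B *ᵥ z * (t * t) + 2 * (B *ᵥ xs ⬝ᵥ z) * t + 0 := by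
    intro t
    have hfeas : A *ᵥ (xs + t • z) = b := by
      rw [mulVec_add, mulVec_smul, hz, hxs, smul_zero, add_zero]
    have hexp : (xs + t • z) ⬝ᵥ B *ᵥ (xs + t • z)
        = xs ⬝ᵥ B *ᵥ xs + (z ⬝ᵥ B *ᵥ z * (t * t) + 2 * (B *ᵥ xs ⬝ᵥ z) * t) := by
      simp only [mulVec_add, mulVec_smul, add_dotProduct, dotProduct_add,
        smul_dotProduct, dotProduct_smul, hxz, dotProduct_comm z (B *ᵥ xs), smul_eq_mul]
      ring
    linarith [hmin _ hfeas]
  have hdisc := discrim_le_zero hquad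
  rw [discrim] at hdisc
  nlinarith

noncomputable def sketchStep {m n τ : ℕ} (A : Matrix (Fin m) (Fin n) ℝ) (b : Fin m → ℝ)
    (B : Matrix (Fin n) (Fin n) ℝ) (S : Matrix (Fin m) (Fin τ) ℝ) (P : Matrix (Fin τ) (Fin τ) ℝ)
    (x : Fin n → ℝ) : Fin n → ℝ :=
  x - (B⁻¹ * Aᵀ * (S * P * Sᵀ)) *ᵥ (A *ᵥ x - b)

section SketchAndProject

variable {m n τ : ℕ} {A : Matrix (Fin m) (Fin n) ℝ} {b : Fin m → ℝ}
  {B Bh : Matrix (Fin n) (Fin n) ℝ} {S : Matrix (Fin m) (Fin τ) ℝ} {P : Matrix (Fin τ) (Fin τ) ℝ}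
  {xs : Fin n → ℝ}

theorem isStarProjection_Zmat (hBh : Bh.PosDef) (hBhB : Bh * Bh = B)
    (hP : PenroseInv (Sᵀ * A * B⁻¹ * Aᵀ * S) P) : IsStarProjection (Zmat A B Bh S P) := by
  have hBh_symm : Bhᵀ = Bh := hBh.isHermitian.eq
  have hBh_inv : Bh⁻¹ᵀ = Bh⁻¹ := by rw [transpose_nonsing_inv, hBh_symm]
  have hB_inv : B⁻¹ = Bh⁻¹ * Bh⁻¹ := by rw [← hBhB, Matrix.mul_inv_rev]
  have hP_symm : Pᵀ = P := hP.transpose_eq_self <| by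
    simp only [transpose_mul, transpose_transpose, hB_inv, hBh_inv, Matrix.mul_assoc]
  constructor
  · calc Zmat A B Bh S P * Zmat A B Bh S P
          = Bh⁻¹ * Aᵀ * S * (P * (Sᵀ * A * B⁻¹ * Aᵀ * S) * P) * Sᵀ * A * Bh⁻¹ := by
            simp only [Zmat, hB_inv, Matrix.mul_assoc]
      _ = Zmat A B Bh S P := by
            rw [hP.2.1]
            simp only [Zmat, Matrix.mul_assoc]
  · rw [IsSelfAdjoint, star_eq_conjTranspose, conjTranspose_eq_transpose_of_trivial]
    simp only [Zmat, transpose_mul, transpose_transpose, hBh_inv, hP_symm,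
      Matrix.mul_assoc]

theorem Zmat_mul_sqrt (hBh : IsUnit Bh) (hBhB : Bh * Bh = B) :
    Zmat A B Bh S P * Bh = Bh * (B⁻¹ * Aᵀ * (S * P * Sᵀ)) * A := by
  rw [isUnit_iff_isUnit_det] at hBh
  simp only [Zmat, ← hBhB, Matrix.mul_inv_rev, Matrix.mul_assoc, nonsing_inv_mul _ hBh,
    mul_nonsing_inv_cancel_left _ _ hBh, Matrix.mul_one]

theorem sqrt_mul_Zmat_mul_sqrt (hBh : IsUnit Bh) :
    Bh * Zmat A B Bh S P * Bh = Aᵀ * (S * P * Sᵀ) * A := by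
  rw [isUnit_iff_isUnit_det] at hBh
  simp only [Zmat, Matrix.mul_assoc, nonsing_inv_mul _ hBh,
    mul_nonsing_inv_cancel_left _ _ hBh, Matrix.mul_one]

theorem dotProduct_mulVec_eq_sqrt (hBh : Bhᵀ = Bh) (hBhB : Bh * Bh = B) (v : Fin n → ℝ) :
    v ⬝ᵥ B *ᵥ v = Bh *ᵥ v ⬝ᵥ Bh *ᵥ v := by
  rw [Matrix.mulVec_dotProduct_mulVec, hBh, hBhB]

theorem sketchLoss_eq_zloss (hBh : Bh.PosDef) (hxs : A *ᵥ xs = b) (x : Fin n → ℝ) :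
    sketchLoss A b S P x = zloss A B Bh S P xs x := by
  have hBh_symm : Bhᵀ = Bh := hBh.isHermitian.eq
  rw [sketchLoss, zloss, ← hxs, ← mulVec_sub, mulVec_mulVec,
    Matrix.mulVec_dotProduct_mulVec, Matrix.mulVec_dotProduct_mulVec, hBh_symm, mulVec_mulVec,
    ← Matrix.mul_assoc, sqrt_mul_Zmat_mul_sqrt hBh.isUnit]

theorem sketchStep_sub (hxs : A *ᵥ xs = b) (x : Fin n → ℝ) :
    sketchStep A b B S P x - xs = (x - xs) - (B⁻¹ * Aᵀ * (S * P * Sᵀ)) *ᵥ (A *ᵥ (x - xs)) := by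
  rw [sketchStep, ← hxs, ← mulVec_sub, sub_right_comm]

theorem sketchStep_sub_mem_range (hxs : A *ᵥ xs = b) {x : Fin n → ℝ}
    (hx : x - xs ∈ Set.range (B⁻¹ * Aᵀ).mulVec) :
    sketchStep A b B S P x - xs ∈ Set.range (B⁻¹ * Aᵀ).mulVec := by
  obtain ⟨u, hu⟩ := hx
  refine ⟨u - (S * P * Sᵀ) *ᵥ (A *ᵥ (x - xs)), ?_⟩
  rw [sketchStep_sub hxs, mulVec_sub, hu, mulVec_mulVec]

theorem sketchStep_sqNorm (hBh : Bh.PosDef) (hBhB : Bh * Bh = B)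
    (hP : PenroseInv (Sᵀ * A * B⁻¹ * Aᵀ * S) P) (hxs : A *ᵥ xs = b) (x : Fin n → ℝ) :
    (sketchStep A b B S P x - xs) ⬝ᵥ B *ᵥ (sketchStep A b B S P x - xs)
      = (x - xs) ⬝ᵥ B *ᵥ (x - xs) - zloss A B Bh S P xs x := by
  have hBh_symm : Bhᵀ = Bh := hBh.isHermitian.eq
  have hproj : Bh *ᵥ (sketchStep A b B S P x - xs)
      = (1 - Zmat A B Bh S P) *ᵥ (Bh *ᵥ (x - xs)) := by
    rw [sketchStep_sub hxs, mulVec_sub, mulVec_mulVec, mulVec_mulVec,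
      ← Zmat_mul_sqrt hBh.isUnit hBhB, sub_mulVec, Matrix.one_mulVec, mulVec_mulVec]
  rw [dotProduct_mulVec_eq_sqrt hBh_symm hBhB, dotProduct_mulVec_eq_sqrt hBh_symm hBhB, hproj,
    (isStarProjection_Zmat hBh hBhB hP).one_sub.mulVec_dotProduct_mulVec_self, sub_mulVec,
    Matrix.one_mulVec, dotProduct_sub, zloss]

end SketchAndProject

theorem leastNorm_mem_range {m n : ℕ} {A : Matrix (Fin m) (Fin n) ℝ} {b : Fin m → ℝ}
    {B : Matrix (Fin n) (Fin n) ℝ} (hB : B.PosDef) {xs : Fin n → ℝ} (hxs : A *ᵥ xs = b)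
    (hmin : ∀ y, A *ᵥ y = b → xs ⬝ᵥ B *ᵥ xs ≤ y ⬝ᵥ B *ᵥ y) :
    xs ∈ Set.range (B⁻¹ * Aᵀ).mulVec := by
  obtain ⟨w, hw⟩ := A.mem_range_transpose_mulVec_of_orthogonal_ker fun z hz =>
    dotProduct_mulVec_eq_zero_of_forall_le hB.posSemidef hxs hmin hz
  refine ⟨w, ?_⟩
  rw [← mulVec_mulVec, hw, mulVec_mulVec,
    nonsing_inv_mul _ ((isUnit_iff_isUnit_det B).mp hB.isUnit), Matrix.one_mulVec]

section SigmaInf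

variable {m n τ q : ℕ} {A : Matrix (Fin m) (Fin n) ℝ} {B Bh : Matrix (Fin n) (Fin n) ℝ}
  {S : Fin q → Matrix (Fin m) (Fin τ) ℝ} {P : Fin q → Matrix (Fin τ) (Fin τ) ℝ}

theorem sigmaInf_le_iSup (hB : B.PosSemidef)
    (hZ : ∀ i, IsStarProjection (Zmat A B Bh (S i) (P i))) {v : Fin n → ℝ} (hv : v ≠ 0)
    (hv_range : v ∈ Set.range (B⁻¹ * Aᵀ).mulVec) :
    sigmaInf A B Bh S P
      ≤ ⨆ i, Bh *ᵥ v ⬝ᵥ Zmat A B Bh (S i) (P i) *ᵥ (Bh *ᵥ v) / (v ⬝ᵥ B *ᵥ v) := by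
  refine csInf_le ⟨0, ?_⟩ ⟨v, hv, hv_range, rfl⟩
  rintro r ⟨w, -, -, rfl⟩
  exact Real.iSup_nonneg fun i =>
    div_nonneg ((hZ i).dotProduct_mulVec_nonneg _) (hB.dotProduct_mulVec_nonneg w)

theorem sigmaInf_le_one (hB : B.PosDef) (hBh : Bhᵀ = Bh) (hBhB : Bh * Bh = B)
    (hZ : ∀ i, IsStarProjection (Zmat A B Bh (S i) (P i))) : sigmaInf A B Bh S P ≤ 1 := by
  by_cases h : ∃ v, v ≠ 0 ∧ v ∈ Set.range (B⁻¹ * Aᵀ).mulVec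
  · obtain ⟨v, hv, hv_range⟩ := h
    have hv_pos : 0 < v ⬝ᵥ B *ᵥ v := hB.dotProduct_mulVec_pos hv
    refine (sigmaInf_le_iSup hB.posSemidef hZ hv hv_range).trans
      (Real.iSup_le (fun i => ?_) zero_le_one)
    rw [div_le_one hv_pos, dotProduct_mulVec_eq_sqrt hBh hBhB]
    exact (hZ i).dotProduct_mulVec_le _
  -- here the set defining `sigmaInf` is empty, and `sInf ∅ = 0` in `ℝ`
  · refine (Real.sInf_nonpos ?_).trans zero_le_one
    rintro r ⟨v, hv, hv_range, -⟩
    exact absurd ⟨v, hv, hv_range⟩ h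

theorem sigmaInf_mul_le_zloss (hB : B.PosDef)
    (hZ : ∀ i, IsStarProjection (Zmat A B Bh (S i) (P i))) {xs x : Fin n → ℝ} {i : Fin q}
    (hmax : ∀ j, zloss A B Bh (S j) (P j) xs x ≤ zloss A B Bh (S i) (P i) xs x)
    (hx : x - xs ∈ Set.range (B⁻¹ * Aᵀ).mulVec) :
    sigmaInf A B Bh S P * ((x - xs) ⬝ᵥ B *ᵥ (x - xs)) ≤ zloss A B Bh (S i) (P i) xs x := by
  by_cases he : x - xs = 0
  · simp [zloss, he]
  have he_pos : 0 < (x - xs) ⬝ᵥ B *ᵥ (x - xs) := hB.dotProduct_mulVec_pos he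
  rw [← le_div_iff₀ he_pos]
  refine (sigmaInf_le_iSup hB.posSemidef hZ he hx).trans (Real.iSup_le (fun j => ?_) ?_)
  · exact div_le_div_of_nonneg_right (hmax j) he_pos.le
  · exact div_nonneg ((hZ i).dotProduct_mulVec_nonneg _) he_pos.le

end SigmaInf

theorem maxdist_linear_convergence_general {m n τ q : ℕ}
    (A : Matrix (Fin m) (Fin n) ℝ) (b : Fin m → ℝ)
    (B Bh : Matrix (Fin n) (Fin n) ℝ)
    (hB : B.PosDef) (hBh : Bh.PosDef) (hBhB : Bh * Bh = B)
    (S : Fin q → Matrix (Fin m) (Fin τ) ℝ) (P : Fin q → Matrix (Fin τ) (Fin τ) ℝ)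
    (hP : ∀ i, PenroseInv ((S i)ᵀ * A * B⁻¹ * Aᵀ * S i) (P i))
    (xs : Fin n → ℝ) (hxs : A.mulVec xs = b)
    (hmin : ∀ y, A.mulVec y = b → xs ⬝ᵥ B.mulVec xs ≤ y ⬝ᵥ B.mulVec y)
    (x : ℕ → Fin n → ℝ) (ik : ℕ → Fin q)
    (hx0 : x 0 ∈ Set.range (B⁻¹ * Aᵀ).mulVec)
    (hsel : ∀ k j, sketchLoss A b (S j) (P j) (x k)
      ≤ sketchLoss A b (S (ik k)) (P (ik k)) (x k))
    (hupd : ∀ k, x (k + 1)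
      = x k - (B⁻¹ * Aᵀ * (S (ik k) * P (ik k) * (S (ik k))ᵀ)).mulVec
          (A.mulVec (x k) - b)) :
    ∀ k, (x k - xs) ⬝ᵥ B.mulVec (x k - xs)
      ≤ (1 - sigmaInf A B Bh S P) ^ k * ((x 0 - xs) ⬝ᵥ B.mulVec (x 0 - xs)) := by
  have hstep k : x (k + 1) = sketchStep A b B (S (ik k)) (P (ik k)) (x k) := hupd k
  have hZ i : IsStarProjection (Zmat A B Bh (S i) (P i)) := isStarProjection_Zmat hBh hBhB (hP i)
  have hrange k : x k - xs ∈ Set.range (B⁻¹ * Aᵀ).mulVec := by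
    induction k with
    | zero =>
      obtain ⟨u, hu⟩ := hx0
      obtain ⟨w, hw⟩ := leastNorm_mem_range hB hxs hmin
      exact ⟨u - w, by rw [mulVec_sub, hu, hw]⟩
    | succ k ih => exact hstep k ▸ sketchStep_sub_mem_range hxs ih
  have hBh_symm : Bhᵀ = Bh := hBh.isHermitian.eq
  intro k
  refine le_geom (u := fun k => (x k - xs) ⬝ᵥ B *ᵥ (x k - xs))
    (sub_nonneg.mpr (sigmaInf_le_one hB hBh_symm hBhB hZ)) k fun k _ => ?_
  have hcontract := sigmaInf_mul_le_zloss (i := ik k) hB hZ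
    (fun j => by simpa only [sketchLoss_eq_zloss (B := B) hBh hxs] using hsel k j) (hrange k)
  rw [hstep k, sketchStep_sqNorm hBh hBhB (hP (ik k)) hxs]
  linarith

/-- Max-distance sketch-and-project converges linearly:
`‖x^k − x*‖²_B ≤ (1 − σ_∞²(B,S))^k ‖x⁰ − x*‖²_B`. -/
theorem maxdist_linear_convergence {m n τ q : ℕ} (hq : 0 < q)
    (A : Matrix (Fin m) (Fin n) ℝ) (b : Fin m → ℝ)
    (B Bh : Matrix (Fin n) (Fin n) ℝ)
    (hB : B.PosDef) (hBh : Bh.PosDef) (hBhB : Bh * Bh = B)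
    (S : Fin q → Matrix (Fin m) (Fin τ) ℝ) (P : Fin q → Matrix (Fin τ) (Fin τ) ℝ)
    (hP : ∀ i, PenroseInv ((S i)ᵀ * A * B⁻¹ * Aᵀ * S i) (P i))
    (xs : Fin n → ℝ) (hxs : A.mulVec xs = b)
    (hmin : ∀ y, A.mulVec y = b → xs ⬝ᵥ B.mulVec xs ≤ y ⬝ᵥ B.mulVec y)
    (x : ℕ → Fin n → ℝ) (ik : ℕ → Fin q)
    (hx0 : x 0 ∈ Set.range (B⁻¹ * Aᵀ).mulVec)
    (hsel : ∀ k j, sketchLoss A b (S j) (P j) (x k)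
      ≤ sketchLoss A b (S (ik k)) (P (ik k)) (x k))
    (hupd : ∀ k, x (k + 1)
      = x k - (B⁻¹ * Aᵀ * (S (ik k) * P (ik k) * (S (ik k))ᵀ)).mulVec
          (A.mulVec (x k) - b)) :
    ∀ k, (x k - xs) ⬝ᵥ B.mulVec (x k - xs)
      ≤ (1 - sigmaInf A B Bh S P) ^ k * ((x 0 - xs) ⬝ᵥ B.mulVec (x 0 - xs)) :=
  maxdist_linear_convergence_general A b B Bh hB hBh hBhB S P hP xs hxs hmin x ik hx0 hsel hupd
end
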